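/- (Lemma 1(ii)) Let a > 0 and define, for -4a < η < 0, G(η) = 2a·( 2·arctan( √(-η² - 4aη)/(-η) ) - π ) - √(-η² - 4aη). Then G is strictly increasing on (-4a, 0), with G(η) → -2πa as η → -4a⁺ and G(η) → 0 as η → 0⁻; hence G maps (-4a, 0) bijectively onto (-2πa, 0). Moreover G'(η) = -√(-η² - 4aη)/η > 0 on (-4a, 0). -/

import Mathlib

open Filter Set Real

set_option linter.unreachableTactic false
set_option linter.unusedTactic false
set_option linter.unnecessarySeqFocus false
set_option linter.unusedVariables false


/-- `G(η) = 2a(2 arctan(√(-η²-4aη)/(-η)) - π) - √(-η²-4aη)`. -/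
noncomputable def Gfun (a η : ℝ) : ℝ :=
  2 * a * (2 * Real.arctan (Real.sqrt (-η ^ 2 - 4 * a * η) / (-η)) - Real.pi) -
    Real.sqrt (-η ^ 2 - 4 * a * η)

/-- (Lemma 1(ii)) For `a > 0`, `G` is strictly increasing on `(-4a, 0)`, with
`G(η) → -2πa` as `η → -4a⁺` and `G(η) → 0` as `η → 0⁻`; it maps `(-4a, 0)`
bijectively onto `(-2πa, 0)`, and `G'(η) = -√(-η²-4aη)/η > 0` on `(-4a, 0)`. -/
theorem Gfun_strictMono_bijective (a : ℝ) (ha : 0 < a) :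
    StrictMonoOn (Gfun a) (Set.Ioo (-4 * a) 0) ∧
    Tendsto (Gfun a) (nhdsWithin (-4 * a) (Set.Ioi (-4 * a))) (nhds (-2 * Real.pi * a)) ∧
    Tendsto (Gfun a) (nhdsWithin 0 (Set.Iio 0)) (nhds 0) ∧
    Set.BijOn (Gfun a) (Set.Ioo (-4 * a) 0) (Set.Ioo (-2 * Real.pi * a) 0) ∧
    (∀ η ∈ Set.Ioo (-4 * a) (0 : ℝ),
      HasDerivAt (Gfun a) (-Real.sqrt (-η ^ 2 - 4 * a * η) / η) η ∧
      0 < -Real.sqrt (-η ^ 2 - 4 * a * η) / η) := by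
  have hπ := Real.pi_pos
  have hcpoly : Continuous (fun η : ℝ => -η ^ 2 - 4 * a * η) := by fun_prop
  -- derivative
  have hderiv : ∀ η ∈ Set.Ioo (-4 * a) (0 : ℝ),
      HasDerivAt (Gfun a) (-Real.sqrt (-η ^ 2 - 4 * a * η) / η) η := by
    rintro η ⟨h1, h2⟩
    have hη0 : η ≠ 0 := ne_of_lt h2
    have hD : 0 < -η^2 - 4*a*η := by nlinarith
    set s := Real.sqrt (-η^2-4*a*η) with hs
    have hs0 : 0 < s := Real.sqrt_pos.mpr hD
    have hs2 : s^2 = -η^2-4*a*η := Real.sq_sqrt hD.le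
    have hDd : HasDerivAt (fun η : ℝ => -η^2 - 4*a*η) (-2*η - 4*a) η := by
      have := ((hasDerivAt_pow 2 η).neg.sub ((hasDerivAt_id η).const_mul (4*a)))
      convert this using 1 <;> first | rfl | ring
    have hsq : HasDerivAt (fun η : ℝ => Real.sqrt (-η^2 - 4*a*η))
        (1/(2*s) * (-2*η - 4*a)) η :=
      (Real.hasDerivAt_sqrt (ne_of_gt hD)).comp η hDd
    have hneg : HasDerivAt (fun η : ℝ => -η) (-1) η := (hasDerivAt_id η).neg
    have hquot : HasDerivAt (fun η : ℝ => Real.sqrt (-η^2 - 4*a*η) / (-η))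
        ((1/(2*s) * (-2*η - 4*a) * (-η) - s * (-1)) / (-η)^2) η :=
      hsq.div hneg (by simpa using hη0)
    have harc : HasDerivAt (fun η : ℝ => Real.arctan (Real.sqrt (-η^2 - 4*a*η) / (-η)))
        ((1/(1 + (s/(-η))^2)) * ((1/(2*s) * (-2*η - 4*a) * (-η) - s * (-1)) / (-η)^2)) η := by
      have := (Real.hasDerivAt_arctan (s/(-η))).comp η hquot
      convert this using 2 <;> first | rfl | ring
    have hG := (((harc.const_mul 2).sub_const Real.pi).const_mul (2*a)).sub hsq
    have key : HasDerivAt (Gfun a) (2*a * (2 * ((1/(1 + (s/(-η))^2)) *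
        ((1/(2*s) * (-2*η - 4*a) * (-η) - s * (-1)) / (-η)^2))) - 1/(2*s) * (-2*η - 4*a)) η := by
      convert hG using 2 <;> first | rfl | (simp [Gfun] <;> ring)
    convert key using 1
    have h4 : 1 + (s/(-η))^2 = -4*a/η := by
      field_simp
      first
      | linear_combination 2*η*hs2
      | linear_combination -η*hs2
      | linear_combination η*hs2
      | linear_combination -2*η*hs2
      | linear_combination hs2
    rw [h4]
    field_simp
    first
    | ring
    | (ring_nf; first
        | linear_combination 2*η*hs2
        | linear_combination -η*hs2
        | linear_combination η*hs2
        | linear_combination -2*η*hs2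
        | linear_combination (2*s)*hs2
        | linear_combination (-2*s)*hs2
        | linear_combination s*hs2
        | linear_combination (-s)*hs2)
  have hpos : ∀ η ∈ Set.Ioo (-4 * a) (0 : ℝ), 0 < -Real.sqrt (-η ^ 2 - 4 * a * η) / η := by
    rintro η ⟨h1, h2⟩
    have hD : 0 < -η^2 - 4*a*η := by nlinarith
    have : -Real.sqrt (-η ^ 2 - 4 * a * η) / η = Real.sqrt (-η ^ 2 - 4 * a * η) / (-η) := by
      ring
    rw [this]
    exact div_pos (Real.sqrt_pos.mpr hD) (by linarith)
  -- continuity on the interval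
  have hcont : ContinuousOn (Gfun a) (Set.Ioo (-4 * a) 0) := fun η hη =>
    ((hderiv η hη).continuousAt).continuousWithinAt
  -- strict monotonicity
  have hmono : StrictMonoOn (Gfun a) (Set.Ioo (-4 * a) 0) := by
    apply strictMonoOn_of_deriv_pos (convex_Ioo _ _) hcont
    intro η hη
    rw [interior_Ioo] at hη
    rw [(hderiv η hη).deriv]
    exact hpos η hη
  -- limit at -4a
  have hlim1 : Tendsto (Gfun a) (nhdsWithin (-4 * a) (Set.Ioi (-4 * a)))
      (nhds (-2 * Real.pi * a)) := by
    have hca : ContinuousAt (Gfun a) (-4 * a) := by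
      have hne : -(-4 * a) ≠ 0 := ne_of_gt (by linarith : (0:ℝ) < -(-4 * a))
      apply ContinuousAt.sub
      · apply ContinuousAt.mul continuousAt_const
        apply ContinuousAt.sub _ continuousAt_const
        apply ContinuousAt.mul continuousAt_const
        apply Real.continuousAt_arctan.comp
        exact ContinuousAt.div
          ((Real.continuous_sqrt.comp (hcpoly)).continuousAt)
          (continuousAt_id.neg) hne
      · exact (Real.continuous_sqrt.comp (hcpoly)).continuousAt
    have hval : Gfun a (-4 * a) = -2 * Real.pi * a := by
      have h0 : Real.sqrt (-(-4 * a) ^ 2 - 4 * a * (-4 * a)) = 0 := by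
        rw [show (-(-4 * a) ^ 2 - 4 * a * (-4 * a)) = 0 by ring, Real.sqrt_zero]
      simp only [Gfun, h0, zero_div, Real.arctan_zero, mul_zero, zero_sub, sub_zero]
      ring
    have := (hca.continuousWithinAt (s := Set.Ioi (-4 * a))).tendsto
    rwa [hval] at this
  -- limit at 0⁻
  have hsqrtTop : Tendsto Real.sqrt atTop atTop := by
    apply tendsto_atTop_atTop.mpr
    intro b
    refine ⟨(max b 0)^2, fun x hx => ?_⟩
    have h0 : (0:ℝ) ≤ (max b 0)^2 := sq_nonneg _
    calc b ≤ max b 0 := le_max_left _ _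
    _ = Real.sqrt ((max b 0)^2) := (Real.sqrt_sq (le_max_right _ _)).symm
    _ ≤ Real.sqrt x := Real.sqrt_le_sqrt hx
  have hinner : Tendsto (fun η : ℝ => -1 - 4*a/η) (nhdsWithin 0 (Set.Iio 0)) atTop := by
    have hneg : Tendsto (fun η : ℝ => -η) (nhdsWithin (0:ℝ) (Set.Iio 0))
        (nhdsWithin (0:ℝ) (Set.Ioi 0)) := by
      have := Filter.Tendsto.inf (f := fun η : ℝ => -η)
        (by simpa using (continuous_neg.tendsto (0:ℝ)))
        (tendsto_principal_principal.mpr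
          (fun x hx => Set.mem_Ioi.mpr (neg_pos.mpr (Set.mem_Iio.mp hx))))
      simpa [nhdsWithin] using this
    have h1 : Tendsto (fun η : ℝ => ((-η)⁻¹)) (nhdsWithin (0:ℝ) (Set.Iio 0)) atTop :=
      tendsto_inv_nhdsGT_zero.comp hneg
    have h2 : Tendsto (fun η : ℝ => 4*a * (-η)⁻¹) (nhdsWithin (0:ℝ) (Set.Iio 0)) atTop :=
      h1.const_mul_atTop (by positivity)
    have h3 : Tendsto (fun η : ℝ => -1 + 4*a * (-η)⁻¹) (nhdsWithin (0:ℝ) (Set.Iio 0)) atTop :=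
      tendsto_atTop_add_const_left _ _ h2
    apply h3.congr'
    filter_upwards [self_mem_nhdsWithin] with x hx
    have : x ≠ 0 := ne_of_lt hx
    simp only [inv_neg]
    ring
  have hlim2 : Tendsto (Gfun a) (nhdsWithin 0 (Set.Iio 0)) (nhds 0) := by
    have harctan : Tendsto (fun η : ℝ => Real.arctan (Real.sqrt (-1 - 4*a/η)))
        (nhdsWithin 0 (Set.Iio 0)) (nhds (Real.pi/2)) :=
      (tendsto_nhds_of_tendsto_nhdsWithin Real.tendsto_arctan_atTop).comp
        (hsqrtTop.comp hinner)
    have hsq0 : Tendsto (fun η : ℝ => Real.sqrt (-η ^ 2 - 4 * a * η))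
        (nhdsWithin 0 (Set.Iio 0)) (nhds 0) := by
      have : ContinuousAt (fun η : ℝ => Real.sqrt (-η ^ 2 - 4 * a * η)) 0 :=
        (Real.continuous_sqrt.comp (hcpoly)).continuousAt
      have h := (this.continuousWithinAt (s := Set.Iio 0)).tendsto
      simpa using h
    have hmain : Tendsto (fun η : ℝ =>
        2 * a * (2 * Real.arctan (Real.sqrt (-1 - 4*a/η)) - Real.pi) -
          Real.sqrt (-η ^ 2 - 4 * a * η))
        (nhdsWithin 0 (Set.Iio 0)) (nhds 0) := by
      have H := ((((harctan.const_mul 2).sub_const Real.pi).const_mul (2*a)).sub hsq0)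
      have e : 2*a*(2*(Real.pi/2) - Real.pi) - 0 = 0 := by ring
      rwa [e] at H
    apply hmain.congr'
    have hmem : Set.Ioi (-4 * a) ∈ nhdsWithin (0:ℝ) (Set.Iio 0) :=
      nhdsWithin_le_nhds (Ioi_mem_nhds (by linarith))
    filter_upwards [self_mem_nhdsWithin, hmem] with η hη hη2
    have hη0 : η < 0 := hη
    have hD : (0:ℝ) ≤ -η^2 - 4*a*η := by nlinarith [mem_Ioi.mp hη2]
    have heq : Real.sqrt (-η ^ 2 - 4 * a * η) / (-η) = Real.sqrt (-1 - 4*a/η) := by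
      rw [show (-η) = Real.sqrt (η^2) by
            rw [Real.sqrt_sq_eq_abs, abs_of_neg hη0],
        ← Real.sqrt_div hD]
      congr 1
      rw [div_eq_iff (pow_ne_zero 2 (ne_of_lt hη0))]
      have hne : η ≠ 0 := ne_of_lt hη0
      field_simp
    show _ = Gfun a η
    rw [Gfun, heq]
  -- mapsTo
  have hmaps : Set.MapsTo (Gfun a) (Set.Ioo (-4 * a) 0) (Set.Ioo (-2 * Real.pi * a) 0) := by
    rintro η hη
    obtain ⟨h1, h2⟩ := hη
    constructor
    · -- lower bound via monotonicity and limit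
      set t := ((-4*a) + η)/2 with ht
      have htmem : t ∈ Set.Ioo (-4 * a) (0:ℝ) := ⟨by simp [ht]; linarith, by simp [ht]; linarith⟩
      have htlt : t < η := by simp [ht]; linarith
      have hle : -2 * Real.pi * a ≤ Gfun a t := by
        apply le_of_tendsto hlim1
        have hmem : Set.Iio t ∈ nhdsWithin (-4*a) (Set.Ioi (-4*a)) :=
          nhdsWithin_le_nhds (Iio_mem_nhds htmem.1)
        filter_upwards [self_mem_nhdsWithin, hmem] with u hu1 hu2
        exact (hmono ⟨hu1, lt_trans hu2 htmem.2⟩ htmem (mem_Iio.mp hu2)).le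
      calc -2 * Real.pi * a ≤ Gfun a t := hle
      _ < Gfun a η := hmono htmem ⟨h1, h2⟩ htlt
    · -- upper bound
      have hD : 0 < -η^2 - 4*a*η := by nlinarith
      have hs0 : 0 < Real.sqrt (-η^2 - 4*a*η) := Real.sqrt_pos.mpr hD
      have harc : Real.arctan (Real.sqrt (-η ^ 2 - 4 * a * η) / (-η)) < Real.pi/2 :=
        Real.arctan_lt_pi_div_two _
      simp only [Gfun]
      nlinarith [hs0, harc]
  -- surjOn
  have hsurj : Set.SurjOn (Gfun a) (Set.Ioo (-4 * a) 0) (Set.Ioo (-2 * Real.pi * a) 0) := by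
    rintro y ⟨hy1, hy2⟩
    -- find u near -4a with Gfun a u < y
    have hev1 : ∀ᶠ u in nhdsWithin (-4*a) (Set.Ioi (-4*a)),
        Gfun a u < y ∧ u ∈ Set.Ioo (-4*a) (0:ℝ) := by
      have e1 : ∀ᶠ u in nhdsWithin (-4*a) (Set.Ioi (-4*a)), Gfun a u < y :=
        hlim1.eventually_lt_const hy1
      have e2 : Set.Iio (0:ℝ) ∈ nhdsWithin (-4*a) (Set.Ioi (-4*a)) :=
        nhdsWithin_le_nhds (Iio_mem_nhds (by linarith))
      filter_upwards [e1, e2, self_mem_nhdsWithin] with u h1 h2 h3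
      exact ⟨h1, h3, h2⟩
    obtain ⟨u, hu1, hu2⟩ := hev1.exists
    have hev2 : ∀ᶠ v in nhdsWithin 0 (Set.Iio 0),
        y < Gfun a v ∧ v ∈ Set.Ioo (-4*a) (0:ℝ) := by
      have e1 : ∀ᶠ v in nhdsWithin 0 (Set.Iio 0), y < Gfun a v :=
        hlim2.eventually_const_lt hy2
      have e2 : Set.Ioi (-4*a) ∈ nhdsWithin (0:ℝ) (Set.Iio 0) :=
        nhdsWithin_le_nhds (Ioi_mem_nhds (by linarith))
      filter_upwards [e1, e2, self_mem_nhdsWithin] with v h1 h2 h3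
      exact ⟨h1, h2, h3⟩
    obtain ⟨v, hv1, hv2⟩ := hev2.exists
    have huv : u < v := by
      by_contra h
      push_neg at h
      have := hmono.monotoneOn hv2 hu2 h
      linarith
    have hsub : Set.Icc u v ⊆ Set.Ioo (-4*a) 0 := fun x hx =>
      ⟨lt_of_lt_of_le hu2.1 hx.1, lt_of_le_of_lt hx.2 hv2.2⟩
    have hy' : y ∈ Set.Ioo (Gfun a u) (Gfun a v) := ⟨hu1, hv1⟩
    obtain ⟨x, hx1, hx2⟩ := intermediate_value_Ioo huv.le (hcont.mono hsub) hy'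
    exact ⟨x, hsub (Set.mem_Icc_of_Ioo hx1), hx2⟩
  exact ⟨hmono, hlim1, hlim2, ⟨hmaps, hmono.injOn, hsurj⟩,
    fun η hη => ⟨hderiv η hη, hpos η hη⟩⟩
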